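/- Let X be a finite set, Z a finite set, μ a probability distribution on X, and F a finite family of functions f : X × Z × Δ_Z → [−1,1], where Δ_Z is the probability simplex over Z. For any g : X → Δ_Z, if a sequence of functions h_1, h_2, ... : X → Δ_Z is produced such that at each step t there exists f_t ∈ F with |E_{x∼μ, z∼g(x)}[f_t(x,z,h_t(x))] − E_{x∼μ, z∼h_t(x)}[f_t(x,z,h_t(x))]| ≥ δ, then the embedded iterates of the corresponding online gradient descent procedure (with losses l_t(h) = |E_{x∼μ, z∼g(x)}[f_t(x,z,h(x))] − E_{x∼μ, z∼h(x)}[f_t(x,z,h(x))]|) can continue for at most T = O(|Z|/δ²) steps. -/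

import Mathlib

/-!
The iterates are projected gradient steps for the losses `|Adv t|` in the `μ`-weighted `L²`
geometry on `X → Z → ℝ`, in which the simplex-valued functions form a convex set containing `g`.
Projecting onto it does not increase the distance to `g`, so every step decreases `‖h t - g‖²` by
at least `2 η t δ`, up to the error `η t ² |Z|`. Summation by parts, using `‖h t - g‖² ≤ 2` and
`∑ 1/√t ≤ 2√T`, gives `T δ ≤ 2 √(|Z| T)`, that is `T ≤ 4 |Z| / δ²`.
-/

open Finset Filter Topology
open LinearMap (BilinForm)

namespace Real

theorem sign_mul_self_eq_abs (r : ℝ) : sign r * r = |r| := by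
  rcases lt_trichotomy r 0 with hr | rfl | hr
  · rw [sign_of_neg hr, abs_of_neg hr, neg_one_mul]
  · simp
  · rw [sign_of_pos hr, abs_of_pos hr, one_mul]

theorem sign_sq_le_one (r : ℝ) : sign r ^ 2 ≤ 1 := by
  rcases sign_apply_eq r with h | h | h <;> norm_num [h]

end Real

theorem nonneg_of_forall_Ioc_two_mul_add_sq_mul_nonneg {a b : ℝ}
    (h : ∀ l ∈ Set.Ioc (0 : ℝ) 1, 0 ≤ 2 * l * a + l ^ 2 * b) : 0 ≤ a := by
  have hlim : Tendsto (fun l : ℝ => 2 * a + l * b) (𝓝[>] 0) (𝓝 (2 * a + 0 * b)) :=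
    ((continuous_const.add (continuous_id.mul continuous_const)).tendsto 0).mono_left
      nhdsWithin_le_nhds
  have hev : ∀ᶠ l in 𝓝[>] (0 : ℝ), 0 ≤ 2 * a + l * b := by
    filter_upwards [Ioc_mem_nhdsGT one_pos] with l hl
    refine (mul_nonneg_iff_of_pos_left hl.1).1 ?_
    linarith [h l hl]
  linarith [ge_of_tendsto hlim hev]

namespace LinearMap.BilinForm

variable {E : Type*} [AddCommGroup E] [Module ℝ E] {B : BilinForm ℝ E}

theorem IsSymm.apply_add_smul_add_smul (hB : B.IsSymm) (u d : E) (c : ℝ) :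
    B (u + c • d) (u + c • d) = B u u + 2 * c * B u d + c ^ 2 * B d d := by
  simp only [map_add, map_smul, LinearMap.add_apply, LinearMap.smul_apply, smul_eq_mul,
    hB.eq d u]
  ring

theorem IsSymm.apply_sub_sub_nonneg_of_isMinOn (hB : B.IsSymm) {K : Set E} (hK : Convex ℝ K)
    {p v y : E} (hp : p ∈ K) (hy : y ∈ K) (hmin : IsMinOn (fun q => B (q - v) (q - v)) K p) :
    0 ≤ B (p - v) (y - p) := by
  refine nonneg_of_forall_Ioc_two_mul_add_sq_mul_nonneg (b := B (y - p) (y - p)) fun l hl => ?_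
  have hmem : p + l • (y - p) ∈ K := hK.add_smul_sub_mem hp hy ⟨hl.1.le, hl.2⟩
  have hle := isMinOn_iff.1 hmin _ hmem
  rw [show p + l • (y - p) - v = (p - v) + l • (y - p) by abel,
    hB.apply_add_smul_add_smul] at hle
  linarith

theorem IsPosSemidef.apply_sub_le_of_isMinOn (hB : B.IsPosSemidef) {K : Set E} (hK : Convex ℝ K)
    {p v y : E} (hp : p ∈ K) (hy : y ∈ K) (hmin : IsMinOn (fun q => B (q - v) (q - v)) K p) :
    B (p - y) (p - y) ≤ B (v - y) (v - y) := by
  have hvar := hB.isSymm.apply_sub_sub_nonneg_of_isMinOn hK hp hy hmin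
  have hcross : B (v - p) (p - y) = B (p - v) (y - p) := by
    rw [← neg_sub p v, ← neg_sub y p, LinearMap.map_neg₂, map_neg, neg_neg]
  have hexp := hB.isSymm.apply_add_smul_add_smul (v - p) (p - y) 1
  rw [one_smul, sub_add_sub_cancel, hcross] at hexp
  linarith [hB.isNonneg.nonneg (v - p)]

theorem IsPosSemidef.apply_sub_le_of_isMinOn_sign_step (hB : B.IsPosSemidef) {K : Set E}
    (hK : Convex ℝ K) {p w y d : E} {η a G : ℝ} (hp : p ∈ K) (hy : y ∈ K)
    (ha : B (y - w) d = a) (hd : B d d ≤ G)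
    (hmin : IsMinOn (fun q => B (q - (w + (η * Real.sign a) • d))
      (q - (w + (η * Real.sign a) • d))) K p) :
    B (p - y) (p - y) ≤ B (w - y) (w - y) - 2 * η * |a| + η ^ 2 * G := by
  have ha' : B (w - y) d = -a := by rw [← neg_sub y w, LinearMap.map_neg₂, ha]
  have hproj := hB.apply_sub_le_of_isMinOn hK hp hy hmin
  rw [show w + (η * Real.sign a) • d - y = (w - y) + (η * Real.sign a) • d by abel,
    hB.isSymm.apply_add_smul_add_smul, ha'] at hproj
  have hsign : 2 * (η * Real.sign a) * -a = -(2 * η * |a|) := by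
    rw [← Real.sign_mul_self_eq_abs]; ring
  have hquad : (η * Real.sign a) ^ 2 * B d d ≤ η ^ 2 * G := by
    rw [mul_pow]
    calc η ^ 2 * Real.sign a ^ 2 * B d d ≤ η ^ 2 * 1 * B d d := by
          gcongr
          · exact hB.isNonneg.nonneg d
          · exact Real.sign_sq_le_one a
      _ ≤ η ^ 2 * G := by rw [mul_one]; gcongr
  linarith

end LinearMap.BilinForm

theorem sum_sq_sub_le_two {Z : Type*} [Fintype Z] {p q : Z → ℝ} (hp : p ∈ stdSimplex ℝ Z)
    (hq : q ∈ stdSimplex ℝ Z) : ∑ z, (p z - q z) ^ 2 ≤ 2 := by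
  calc ∑ z, (p z - q z) ^ 2 ≤ ∑ z, (p z + q z) := by
        gcongr with z
        have hp1 : p z ≤ 1 := hp.2 ▸ single_le_sum (fun z _ => hp.1 z) (mem_univ z)
        have hq1 : q z ≤ 1 := hq.2 ▸ single_le_sum (fun z _ => hq.1 z) (mem_univ z)
        nlinarith [hp.1 z, hq.1 z]
    _ = 2 := by rw [sum_add_distrib, hp.2, hq.2]; norm_num

theorem sum_sq_le_card_of_abs_le_one {Z : Type*} [Fintype Z] {u : Z → ℝ} (hu : ∀ z, |u z| ≤ 1) :
    ∑ z, u z ^ 2 ≤ Fintype.card Z := by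
  calc ∑ z, u z ^ 2 ≤ ∑ _z : Z, (1 : ℝ) := by
        gcongr with z
        rw [sq_le_one_iff_abs_le_one]
        exact hu z
    _ = Fintype.card Z := by simp

section WeightedInner

variable {X Z : Type*} [Fintype X] [Fintype Z]

def weightedInner (μ : X → ℝ) : BilinForm ℝ (X → Z → ℝ) :=
  LinearMap.mk₂ ℝ (fun u w => ∑ x, μ x * ∑ z, u x z * w x z)
    (fun u u' w => by simp only [Pi.add_apply, add_mul, sum_add_distrib, mul_add])
    (fun c u w => by
      simp only [Pi.smul_apply, smul_eq_mul, mul_assoc, ← mul_sum, mul_left_comm (μ _) c])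
    (fun u w w' => by simp only [Pi.add_apply, mul_add, sum_add_distrib])
    (fun c u w => by simp only [Pi.smul_apply, smul_eq_mul, mul_left_comm _ c, ← mul_sum])

theorem weightedInner_apply (μ : X → ℝ) (u w : X → Z → ℝ) :
    weightedInner μ u w = ∑ x, μ x * ∑ z, u x z * w x z := rfl

theorem weightedInner_self (μ : X → ℝ) (u : X → Z → ℝ) :
    weightedInner μ u u = ∑ x, μ x * ∑ z, u x z ^ 2 := by
  simp only [weightedInner_apply, sq]

theorem weightedInner_self_le_of_forall_sum_sq_le {μ : X → ℝ} (hμ0 : ∀ x, 0 ≤ μ x)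
    (hμ1 : ∑ x, μ x = 1) {u : X → Z → ℝ} {C : ℝ} (hu : ∀ x, ∑ z, u x z ^ 2 ≤ C) :
    weightedInner μ u u ≤ C := by
  calc weightedInner μ u u ≤ ∑ x, μ x * C := by
        rw [weightedInner_self]
        gcongr with x
        exacts [hμ0 x, hu x]
    _ = C := by rw [← sum_mul, hμ1, one_mul]

theorem weightedInner_isPosSemidef {μ : X → ℝ} (hμ0 : ∀ x, 0 ≤ μ x) :
    (weightedInner (Z := Z) μ).IsPosSemidef where
  eq u w := by simp only [weightedInner_apply, mul_comm (u _ _)]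
  nonneg u := by
    rw [weightedInner_self]
    exact sum_nonneg fun x _ => mul_nonneg (hμ0 x) (sum_nonneg fun z _ => sq_nonneg _)

theorem weightedInner_sub_self_le_two {μ : X → ℝ} (hμ0 : ∀ x, 0 ≤ μ x) (hμ1 : ∑ x, μ x = 1)
    {u v : X → Z → ℝ} (hu : ∀ x, u x ∈ stdSimplex ℝ Z) (hv : ∀ x, v x ∈ stdSimplex ℝ Z) :
    weightedInner μ (u - v) (u - v) ≤ 2 :=
  weightedInner_self_le_of_forall_sum_sq_le hμ0 hμ1 fun x => sum_sq_sub_le_two (hu x) (hv x)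

theorem weightedInner_projected_sign_step {μ : X → ℝ} (hμ0 : ∀ x, 0 ≤ μ x)
    (hμ1 : ∑ x, μ x = 1) {g w p d : X → Z → ℝ} {η a : ℝ} (hg : ∀ x, g x ∈ stdSimplex ℝ Z)
    (hp : ∀ x, p x ∈ stdSimplex ℝ Z) (hd : ∀ x z, |d x z| ≤ 1)
    (ha : weightedInner μ (g - w) d = a)
    (hmin : ∀ q : X → Z → ℝ, (∀ x, q x ∈ stdSimplex ℝ Z) →
      ∑ x, μ x * ∑ z, (p x z - (w x z + η * Real.sign a * d x z)) ^ 2 ≤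
        ∑ x, μ x * ∑ z, (q x z - (w x z + η * Real.sign a * d x z)) ^ 2) :
    weightedInner μ (p - g) (p - g) ≤
      weightedInner μ (w - g) (w - g) - 2 * η * |a| + η ^ 2 * Fintype.card Z :=
  (weightedInner_isPosSemidef hμ0).apply_sub_le_of_isMinOn_sign_step
    (convex_pi fun _ _ => convex_stdSimplex ℝ Z) (fun x _ => hp x) (fun x _ => hg x) ha
    (weightedInner_self_le_of_forall_sum_sq_le hμ0 hμ1 fun x =>
      sum_sq_le_card_of_abs_le_one fun z => hd x z)
    (isMinOn_iff.2 fun q hq => by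
      simp only [weightedInner_self]
      exact hmin q fun x => hq x (Set.mem_univ x))

end WeightedInner

theorem sum_Icc_sub_mul_le {a b : ℕ → ℝ} {M : ℝ} (ha0 : ∀ t, 0 ≤ a t) (haM : ∀ t, a t ≤ M)
    (hb : Monotone b) (hb0 : 0 ≤ b 0) (T : ℕ) :
    ∑ t ∈ Icc 1 T, (a t - a (t + 1)) * b t ≤ M * b T := by
  have hbT : 0 ≤ b T := hb0.trans (hb T.zero_le)
  suffices ∑ t ∈ Icc 1 T, (a t - a (t + 1)) * b t ≤ (M - a (T + 1)) * b T by
    nlinarith [ha0 (T + 1)]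
  induction T with
  | zero => simpa using mul_nonneg (sub_nonneg.2 (haM 1)) hb0
  | succ n ih =>
    rw [sum_Icc_succ_top (by omega)]
    have hbn : b n ≤ b (n + 1) := hb n.le_succ
    nlinarith [ih (hb0.trans (hb n.zero_le)), mul_le_mul_of_nonneg_right (haM (n + 1))
      (sub_nonneg.2 hbn)]

theorem sum_Icc_inv_sqrt_le (T : ℕ) : ∑ t ∈ Icc 1 T, (√t)⁻¹ ≤ 2 * √T := by
  induction T with
  | zero => simp
  | succ n ih =>
    rw [sum_Icc_succ_top (by omega)]
    have hpos : 0 < √(n + 1 : ℝ) := Real.sqrt_pos.2 (by positivity)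
    have hmono : √(n : ℝ) ≤ √(n + 1 : ℝ) := Real.sqrt_le_sqrt (by linarith)
    -- `(√(n+1) - √n) (√(n+1) + √n) = 1` and `√n ≤ √(n+1)`
    have hstep : (√(n + 1 : ℝ))⁻¹ ≤ 2 * √(n + 1 : ℝ) - 2 * √n := by
      rw [inv_le_iff_one_le_mul₀' hpos]
      nlinarith [Real.mul_self_sqrt (by positivity : (0 : ℝ) ≤ n + 1),
        Real.mul_self_sqrt (by positivity : (0 : ℝ) ≤ n)]
    push_cast
    linarith

theorem sum_Icc_le_of_descent {D a η : ℕ → ℝ} {M s : ℝ} (hs : 0 < s) (hD0 : ∀ t, 0 ≤ D t)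
    (hDM : ∀ t, D t ≤ M) (hη : ∀ t, η t = 1 / (s * √t)) {T : ℕ}
    (hstep : ∀ t ∈ Icc 1 T, 2 * η t * a t ≤ D t - D (t + 1) + η t ^ 2 * s ^ 2) :
    ∑ t ∈ Icc 1 T, a t ≤ (M / 2 + 1) * s * √T := by
  have hpoint : ∀ t ∈ Icc 1 T, a t ≤ (D t - D (t + 1)) * (s * √t / 2) + s / 2 * (√t)⁻¹ := by
    intro t ht
    have hsqrt : 0 < √(t : ℝ) := Real.sqrt_pos.2 (by exact_mod_cast (mem_Icc.1 ht).1)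
    have h := mul_le_mul_of_nonneg_right (hstep t ht) (by positivity : 0 ≤ s * √t / 2)
    rw [hη t] at h
    field_simp at h ⊢
    nlinarith [Real.mul_self_sqrt (Nat.cast_nonneg t : (0 : ℝ) ≤ t)]
  have hb : Monotone fun t : ℕ => s * √t / 2 := fun m n hmn => by
    dsimp only
    gcongr
  calc ∑ t ∈ Icc 1 T, a t
      ≤ ∑ t ∈ Icc 1 T, (D t - D (t + 1)) * (s * √t / 2) + s / 2 * ∑ t ∈ Icc 1 T, (√t)⁻¹ := by
        rw [mul_sum, ← sum_add_distrib]
        exact sum_le_sum hpoint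
    _ ≤ M * (s * √T / 2) + s / 2 * (2 * √T) := by
        gcongr
        · exact sum_Icc_sub_mul_le hD0 hDM hb (by simp) T
        · exact sum_Icc_inv_sqrt_le T
    _ = (M / 2 + 1) * s * √T := by ring

theorem mul_sq_le_sq_of_mul_le_mul_sqrt {T δ c : ℝ} (hT : 0 ≤ T) (hδ : 0 ≤ δ)
    (h : T * δ ≤ c * √T) : T * δ ^ 2 ≤ c ^ 2 := by
  rcases hT.eq_or_lt with rfl | hT
  · simpa using sq_nonneg c
  have hsqrt : 0 < √T := Real.sqrt_pos.2 hT
  have hcancel : √T * δ ≤ c := by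
    refine le_of_mul_le_mul_left ?_ hsqrt
    rw [← mul_assoc, Real.mul_self_sqrt hT.le, mul_comm (√T)]
    exact h
  calc T * δ ^ 2 = (√T * δ) ^ 2 := by rw [mul_pow, Real.sq_sqrt hT.le]
    _ ≤ c ^ 2 := pow_le_pow_left₀ (by positivity) hcancel 2

theorem indistinguishability_step_bound_general
    {X Z : Type*} [Fintype X] [Fintype Z] [Nonempty Z]
    (μ : X → ℝ) (hμ0 : ∀ x, 0 ≤ μ x) (hμ1 : ∑ x, μ x = 1)
    (g : X → Z → ℝ) (hg0 : ∀ x z, 0 ≤ g x z) (hg1 : ∀ x, ∑ z, g x z = 1)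
    (δ : ℝ) (hδ : 0 < δ) (T : ℕ)
    (h : ℕ → X → Z → ℝ)
    (hsimplex : ∀ t x, (∀ z, 0 ≤ h t x z) ∧ ∑ z, h t x z = 1)
    (f : ℕ → X → Z → (Z → ℝ) → ℝ)
    (hfbdd : ∀ t ∈ Finset.Icc 1 T, ∀ x z pz, |f t x z pz| ≤ 1)
    (Adv : ℕ → ℝ)
    (hAdv : ∀ t, Adv t =
      (∑ x, μ x * ∑ z, g x z * f t x z (h t x))
        - ∑ x, μ x * ∑ z, h t x z * f t x z (h t x))
    (hbig : ∀ t ∈ Finset.Icc 1 T, δ ≤ |Adv t|)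
    (η : ℕ → ℝ)
    (hη : ∀ t, η t = 1 / (Real.sqrt (Fintype.card Z) * Real.sqrt t))
    (hupdate : ∀ t ∈ Finset.Icc 1 T, ∀ h' : X → Z → ℝ,
      (∀ x, (∀ z, 0 ≤ h' x z) ∧ ∑ z, h' x z = 1) →
      ∑ x, μ x * ∑ z,
          (h (t + 1) x z - (h t x z + η t * Real.sign (Adv t) * f t x z (h t x))) ^ 2
        ≤ ∑ x, μ x * ∑ z,
          (h' x z - (h t x z + η t * Real.sign (Adv t) * f t x z (h t x))) ^ 2) :
    (T : ℝ) ≤ 9 * Fintype.card Z / δ ^ 2 := by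
  set K : ℝ := (Fintype.card Z : ℝ)
  have hK : 0 < K := Nat.cast_pos.2 Fintype.card_pos
  have hgS : ∀ x, g x ∈ stdSimplex ℝ Z := fun x => ⟨hg0 x, hg1 x⟩
  have hdescent : ∀ t ∈ Icc 1 T, 2 * η t * |Adv t| ≤ weightedInner μ (h t - g) (h t - g)
      - weightedInner μ (h (t + 1) - g) (h (t + 1) - g) + η t ^ 2 * √K ^ 2 := by
    intro t ht
    have hadv : weightedInner μ (g - h t) (fun x z => f t x z (h t x)) = Adv t := by
      simp only [hAdv, weightedInner_apply, Pi.sub_apply, sub_mul, sum_sub_distrib, mul_sub]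
    rw [Real.sq_sqrt hK.le]
    linarith [weightedInner_projected_sign_step hμ0 hμ1 hgS (hsimplex (t + 1))
      (fun x z => hfbdd t ht x z _) hadv (hupdate t ht)]
  have hregret := sum_Icc_le_of_descent (D := fun t => weightedInner μ (h t - g) (h t - g))
    (Real.sqrt_pos.2 hK) (fun t => (weightedInner_isPosSemidef hμ0).isNonneg.nonneg _)
    (fun t => weightedInner_sub_self_le_two hμ0 hμ1 (hsimplex t) hgS) hη hdescent
  have hsum : T * δ ≤ ∑ t ∈ Icc 1 T, |Adv t| := by
    simpa using card_nsmul_le_sum _ _ _ hbig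
  have hsq := mul_sq_le_sq_of_mul_le_mul_sqrt T.cast_nonneg hδ.le (hsum.trans hregret)
  rw [le_div_iff₀ (by positivity)]
  nlinarith [Real.sq_sqrt hK.le]

/-- **Step-count bound for the indistinguishability algorithm.** Distributions on `Z` are
represented by functions `X → Z → ℝ` that are pointwise nonnegative and sum to `1`. The
iterates `h t` follow online gradient descent in the `μ`-weighted Euclidean geometry:
`h (t+1)` is the projection (onto simplex-valued functions) of the gradient step
`h t + η t · sign(Adv t) · f t`, with step sizes `η t = 1/(√|Z|·√t)` (from diameter
`D ≤ 2` and gradient bound `G ≤ 2√|Z|`). If at each step `1 ≤ t ≤ T` some test function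
`f t ∈ F` (bounded by `1`) attains advantage `|Adv t| ≥ δ` in distinguishing `h t` from
`g`, then the procedure can continue for at most `T ≤ 9·|Z|/δ²` steps. -/
theorem indistinguishability_step_bound
    {X Z : Type*} [Fintype X] [Fintype Z] [Nonempty Z]
    (μ : X → ℝ) (hμ0 : ∀ x, 0 ≤ μ x) (hμ1 : ∑ x, μ x = 1)
    (g : X → Z → ℝ) (hg0 : ∀ x z, 0 ≤ g x z) (hg1 : ∀ x, ∑ z, g x z = 1)
    (F : Set (X → Z → (Z → ℝ) → ℝ))
    (δ : ℝ) (hδ : 0 < δ) (T : ℕ)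
    (h : ℕ → X → Z → ℝ)
    (hsimplex : ∀ t x, (∀ z, 0 ≤ h t x z) ∧ ∑ z, h t x z = 1)
    (f : ℕ → X → Z → (Z → ℝ) → ℝ)
    (hfF : ∀ t ∈ Finset.Icc 1 T, f t ∈ F)
    (hfbdd : ∀ t ∈ Finset.Icc 1 T, ∀ x z pz, |f t x z pz| ≤ 1)
    (Adv : ℕ → ℝ)
    (hAdv : ∀ t, Adv t =
      (∑ x, μ x * ∑ z, g x z * f t x z (h t x))
        - ∑ x, μ x * ∑ z, h t x z * f t x z (h t x))
    (hbig : ∀ t ∈ Finset.Icc 1 T, δ ≤ |Adv t|)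
    (η : ℕ → ℝ)
    (hη : ∀ t, η t = 1 / (Real.sqrt (Fintype.card Z) * Real.sqrt t))
    (hupdate : ∀ t ∈ Finset.Icc 1 T, ∀ h' : X → Z → ℝ,
      (∀ x, (∀ z, 0 ≤ h' x z) ∧ ∑ z, h' x z = 1) →
      ∑ x, μ x * ∑ z,
          (h (t + 1) x z - (h t x z + η t * Real.sign (Adv t) * f t x z (h t x))) ^ 2
        ≤ ∑ x, μ x * ∑ z,
          (h' x z - (h t x z + η t * Real.sign (Adv t) * f t x z (h t x))) ^ 2) :
    (T : ℝ) ≤ 9 * Fintype.card Z / δ ^ 2 :=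
  indistinguishability_step_bound_general μ hμ0 hμ1 g hg0 hg1 δ hδ T h hsimplex f hfbdd Adv hAdv
    hbig η hη hupdate
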